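/- arXiv:1911.06006 — 3 statements merged into one kernel-verified Lean document; each statement's English description precedes it below -/
import Mathlib

section
/- Let $y_1, y_2 \in (0,1)$, $h = \sqrt{y_1+y_2-y_1y_2}$, $x_l, x_r = \frac{y_2(h \mp y_1)^2}{(y_1+y_2)^2}$, $\alpha = y_1/y_2$. Then $\int_{x_l}^{x_r} \frac{(\alpha+1)\sqrt{(x_r-x)(x-x_l)}}{2\pi y_1 x(1-x)}\,dx = 1$, i.e., the limiting spectral distribution of the Beta matrix is a probability density. -/
/-!
Write `R(x) = √((b - x)(x - a))`. Partial fractions `1 / (x(1 - x)) = 1 / x + 1 / (1 - x)`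
and the reflection `x ↦ 1 - x` reduce the integral to `∫ₐᵇ R(x) / x dx = π(a + b)/2 - π√(ab)`,
which has an elementary arcsine primitive; hence
`∫ₐᵇ R(x) / (x(1 - x)) dx = π(1 - √(ab) - √((1 - a)(1 - b)))`.
At the edges of the Beta law `√(x_l x_r) = y₂(1 - y₁)/(y₁ + y₂)` and
`√((1 - x_l)(1 - x_r)) = y₁(1 - y₂)/(y₁ + y₂)`, and the normalising constant `(α + 1)/(2π y₁)`
turns this into `1`.
-/

open Real

theorem HasDerivAt.arcsin_of_one_sub_sq_eq {f : ℝ → ℝ} {f' c x : ℝ} (hf : HasDerivAt f f' x)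
    (hc : 0 < c) (hfc : 1 - f x ^ 2 = c ^ 2) : HasDerivAt (fun y => arcsin (f y)) (f' / c) x := by
  have hc2 : 0 < c ^ 2 := by positivity
  have h₁ : f x ≠ -1 := by rintro h; rw [h] at hfc; linarith
  have h₂ : f x ≠ 1 := by rintro h; rw [h] at hfc; linarith
  have := (hasDerivAt_arcsin h₁ h₂).comp x hf
  rwa [hfc, sqrt_sq hc.le, one_div_mul_eq_div] at this

section Chord

variable {a b : ℝ}

noncomputable def primitiveSqrtChordDivSelf (a b x : ℝ) : ℝ :=
  √((b - x) * (x - a)) + (a + b) / 2 * arcsin ((2 * x - a - b) / (b - a))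
    - √(a * b) * arcsin (((a + b) * x - 2 * (a * b)) / (x * (b - a)))

theorem hasDerivAt_primitiveSqrtChordDivSelf (ha : 0 < a) {x : ℝ} (hax : a < x) (hxb : x < b) :
    HasDerivAt (primitiveSqrtChordDivSelf a b) (√((b - x) * (x - a)) / x) x := by
  have hx : 0 < x := ha.trans hax
  have hba : 0 < b - a := by linarith
  set R := √((b - x) * (x - a))
  set s := √(a * b)
  have hR : 0 < R := sqrt_pos.2 (by nlinarith)
  have hR2 : R ^ 2 = (b - x) * (x - a) := sq_sqrt (by nlinarith)
  have hs : 0 < s := sqrt_pos.2 (by nlinarith)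
  have hs2 : s ^ 2 = a * b := sq_sqrt (by nlinarith)
  have hdR : HasDerivAt (fun y => √((b - y) * (y - a))) ((a + b - 2 * x) / (2 * R)) x := by
    have hq : HasDerivAt (fun y => (b - y) * (y - a)) (a + b - 2 * x) x :=
      (((hasDerivAt_id' x).const_sub b).mul ((hasDerivAt_id' x).sub_const a)).congr_deriv
        (by ring)
    exact hq.sqrt (by nlinarith)
  have hd1 : HasDerivAt (fun y => arcsin ((2 * y - a - b) / (b - a))) (1 / R) x := by
    have hw : HasDerivAt (fun y => (2 * y - a - b) / (b - a)) (2 / (b - a)) x := by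
      simpa using ((((hasDerivAt_id' x).const_mul 2).sub_const a).sub_const b).div_const (b - a)
    refine (hw.arcsin_of_one_sub_sq_eq (c := 2 * R / (b - a)) (by positivity)
      (by rw [div_pow, div_pow, mul_pow, hR2]; field_simp; ring)).congr_deriv ?_
    field_simp
  have hd2 : HasDerivAt (fun y => arcsin (((a + b) * y - 2 * (a * b)) / (y * (b - a))))
      (s / (x * R)) x := by
    have hp : HasDerivAt (fun y => ((a + b) * y - 2 * (a * b)) / (y * (b - a)))
        (2 * (a * b) / (x ^ 2 * (b - a))) x := by
      refine ((((hasDerivAt_id' x).const_mul (a + b)).sub_const (2 * (a * b))).div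
        ((hasDerivAt_id' x).mul_const (b - a)) (by positivity)).congr_deriv ?_
      field_simp; ring
    refine (hp.arcsin_of_one_sub_sq_eq (c := 2 * s * R / (x * (b - a))) (by positivity) (by
      rw [div_pow, div_pow, mul_pow, mul_pow, mul_pow, hR2, hs2]; field_simp; ring)).congr_deriv ?_
    field_simp
    exact hs2.symm
  refine ((hdR.add (hd1.const_mul ((a + b) / 2))).sub (hd2.const_mul s)).congr_deriv ?_
  field_simp
  rw [hs2, hR2]
  ring

theorem continuousOn_primitiveSqrtChordDivSelf (ha : 0 < a) (hab : a < b) :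
    ContinuousOn (primitiveSqrtChordDivSelf a b) (Set.Icc a b) := by
  have hx : ∀ x ∈ Set.Icc a b, x * (b - a) ≠ 0 := fun x hx =>
    (mul_pos (ha.trans_le hx.1) (sub_pos.2 hab)).ne'
  unfold primitiveSqrtChordDivSelf
  fun_prop (disch := assumption)

theorem intervalIntegrable_sqrt_chord_div {g : ℝ → ℝ} (hg : ContinuousOn g (Set.uIcc a b))
    (hg0 : ∀ x ∈ Set.uIcc a b, g x ≠ 0) :
    IntervalIntegrable (fun x => √((b - x) * (x - a)) / g x) MeasureTheory.volume a b :=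
  (ContinuousOn.div (by fun_prop) hg hg0).intervalIntegrable

theorem integral_sqrt_chord_div_self (ha : 0 < a) (hab : a < b) :
    ∫ x in a..b, √((b - x) * (x - a)) / x = π / 2 * (a + b) - π * √(a * b) := by
  have hba : b - a ≠ 0 := (sub_pos.2 hab).ne'
  have hb0 : b ≠ 0 := (ha.trans hab).ne'
  have hint := intervalIntegrable_sqrt_chord_div (a := a) (b := b) (g := fun x => x)
    (continuousOn_id' _) fun x hx => (ha.trans_le (Set.uIcc_of_le hab.le ▸ hx).1).ne'
  rw [intervalIntegral.integral_eq_sub_of_hasDerivAt_of_le hab.le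
    (continuousOn_primitiveSqrtChordDivSelf ha hab)
    (fun x hx => hasDerivAt_primitiveSqrtChordDivSelf ha hx.1 hx.2) hint]
  have hb_arg : ((a + b) * b - 2 * (a * b)) / (b * (b - a)) = 1 := by
    field_simp; ring
  have ha_arg : ((a + b) * a - 2 * (a * b)) / (a * (b - a)) = -1 := by
    field_simp; ring
  simp only [primitiveSqrtChordDivSelf, hb_arg, ha_arg, sub_self, zero_mul, mul_zero, sqrt_zero]
  rw [show (2 * b - a - b) / (b - a) = 1 by field_simp; ring,
    show (2 * a - a - b) / (b - a) = -1 by field_simp; ring, arcsin_one, arcsin_neg_one]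
  ring

theorem integral_sqrt_chord_div_one_sub (hab : a < b) (hb : b < 1) :
    ∫ x in a..b, √((b - x) * (x - a)) / (1 - x)
      = π / 2 * (2 - a - b) - π * √((1 - a) * (1 - b)) := by
  have hreflect : ∀ x, √((b - x) * (x - a)) / (1 - x)
      = √(((1 - a) - (1 - x)) * ((1 - x) - (1 - b))) / (1 - x) := fun x => by ring_nf
  simp only [hreflect]
  rw [intervalIntegral.integral_comp_sub_left (fun u => √(((1 - a) - u) * (u - (1 - b))) / u),
    integral_sqrt_chord_div_self (by linarith) (by linarith), mul_comm (1 - b)]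
  ring

theorem integral_sqrt_chord_div_mul_one_sub (ha : 0 < a) (hab : a < b) (hb : b < 1) :
    ∫ x in a..b, √((b - x) * (x - a)) / (x * (1 - x))
      = π * (1 - √(a * b) - √((1 - a) * (1 - b))) := by
  have hpos : ∀ x ∈ Set.uIcc a b, 0 < x ∧ 0 < 1 - x := fun x hx => by
    rw [Set.uIcc_of_le hab.le] at hx
    exact ⟨ha.trans_le hx.1, by linarith [hx.2]⟩
  have hsplit : ∀ x ∈ Set.uIcc a b, √((b - x) * (x - a)) / (x * (1 - x))
      = √((b - x) * (x - a)) / x + √((b - x) * (x - a)) / (1 - x) := fun x hx => by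
    obtain ⟨hx0, hx1⟩ := hpos x hx
    field_simp
    ring
  have hint₀ := intervalIntegrable_sqrt_chord_div (g := fun x => x) (continuousOn_id' _)
    fun x hx => (hpos x hx).1.ne'
  have hint₁ := intervalIntegrable_sqrt_chord_div (g := fun x => 1 - x) (by fun_prop)
    fun x hx => (hpos x hx).2.ne'
  rw [intervalIntegral.integral_congr hsplit, intervalIntegral.integral_add hint₀ hint₁,
    integral_sqrt_chord_div_self ha hab, integral_sqrt_chord_div_one_sub hab hb]
  ring

end Chord

section BetaEdges

variable {y1 y2 h : ℝ}

theorem betaEdges_mul (hh : h ^ 2 = y1 + y2 - y1 * y2) (hs : y1 + y2 ≠ 0) :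
    y2 * (h - y1) ^ 2 / (y1 + y2) ^ 2 * (y2 * (h + y1) ^ 2 / (y1 + y2) ^ 2)
      = (y2 * (1 - y1) / (y1 + y2)) ^ 2 := by
  field_simp
  linear_combination (y2 ^ 2 * (h ^ 2 - y1 ^ 2 + (1 - y1) * (y1 + y2))) * hh

theorem one_sub_betaEdge_left (hh : h ^ 2 = y1 + y2 - y1 * y2) (hs : y1 + y2 ≠ 0) :
    1 - y2 * (h - y1) ^ 2 / (y1 + y2) ^ 2 = y1 * (h + y2) ^ 2 / (y1 + y2) ^ 2 := by
  field_simp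
  linear_combination (-(y1 + y2)) * hh

theorem one_sub_betaEdge_right (hh : h ^ 2 = y1 + y2 - y1 * y2) (hs : y1 + y2 ≠ 0) :
    1 - y2 * (h + y1) ^ 2 / (y1 + y2) ^ 2 = y1 * (h - y2) ^ 2 / (y1 + y2) ^ 2 := by
  field_simp
  linear_combination (-(y1 + y2)) * hh

theorem one_sub_betaEdges_mul (hh : h ^ 2 = y1 + y2 - y1 * y2) (hs : y1 + y2 ≠ 0) :
    (1 - y2 * (h - y1) ^ 2 / (y1 + y2) ^ 2) * (1 - y2 * (h + y1) ^ 2 / (y1 + y2) ^ 2)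
      = (y1 * (1 - y2) / (y1 + y2)) ^ 2 := by
  rw [one_sub_betaEdge_left hh hs, one_sub_betaEdge_right hh hs]
  field_simp
  linear_combination (y1 ^ 2 * (h ^ 2 - y2 ^ 2 + (1 - y2) * (y1 + y2))) * hh

theorem betaEdges_bounds (hy1 : y1 ∈ Set.Ioo (0 : ℝ) 1) (hy2 : y2 ∈ Set.Ioo (0 : ℝ) 1)
    (hh : h ^ 2 = y1 + y2 - y1 * y2) (h0 : 0 < h) :
    0 < y2 * (h - y1) ^ 2 / (y1 + y2) ^ 2 ∧
      y2 * (h - y1) ^ 2 / (y1 + y2) ^ 2 < y2 * (h + y1) ^ 2 / (y1 + y2) ^ 2 ∧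
      y2 * (h + y1) ^ 2 / (y1 + y2) ^ 2 < 1 := by
  obtain ⟨hy10, hy11⟩ := hy1
  obtain ⟨hy20, hy21⟩ := hy2
  have hs : 0 < y1 + y2 := by linarith
  have hy1h : h - y1 ≠ 0 := by nlinarith
  have hy2h : h - y2 ≠ 0 := by nlinarith
  refine ⟨by positivity, ?_, ?_⟩
  · gcongr _ * ?_ / _
    nlinarith
  · rw [← sub_pos, one_sub_betaEdge_right hh hs.ne']
    positivity

end BetaEdges

theorem stmt_3 (y1 y2 : ℝ) (hy1 : y1 ∈ Set.Ioo (0:ℝ) 1) (hy2 : y2 ∈ Set.Ioo (0:ℝ) 1) :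
    let h := Real.sqrt (y1 + y2 - y1 * y2)
    let xl := y2 * (h - y1) ^ 2 / (y1 + y2) ^ 2
    let xr := y2 * (h + y1) ^ 2 / (y1 + y2) ^ 2
    let α := y1 / y2
    (∫ x in xl..xr, (α + 1) * Real.sqrt ((xr - x) * (x - xl)) /
        (2 * π * y1 * x * (1 - x))) = 1 := by
  intro h xl xr α
  have hs : 0 < y1 + y2 := by linarith [hy1.1, hy2.1]
  have hD : 0 < y1 + y2 - y1 * y2 := by nlinarith [hy1.1, hy1.2, hy2.1]
  have hh : h ^ 2 = y1 + y2 - y1 * y2 := sq_sqrt hD.le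
  obtain ⟨hxl, hxlr, hxr⟩ : 0 < xl ∧ xl < xr ∧ xr < 1 :=
    betaEdges_bounds hy1 hy2 hh (sqrt_pos.2 hD)
  have hprod : √(xl * xr) = y2 * (1 - y1) / (y1 + y2) := by
    rw [betaEdges_mul hh hs.ne', sqrt_sq (div_nonneg (by nlinarith [hy1.2, hy2.1]) hs.le)]
  have hprod' : √((1 - xl) * (1 - xr)) = y1 * (1 - y2) / (y1 + y2) := by
    rw [one_sub_betaEdges_mul hh hs.ne', sqrt_sq (div_nonneg (by nlinarith [hy1.1, hy2.2]) hs.le)]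
  calc (∫ x in xl..xr, (α + 1) * √((xr - x) * (x - xl)) / (2 * π * y1 * x * (1 - x)))
      = (α + 1) / (2 * π * y1) * ∫ x in xl..xr, √((xr - x) * (x - xl)) / (x * (1 - x)) := by
        rw [← intervalIntegral.integral_const_mul]
        congr 1 with x
        rw [div_mul_div_comm]
        ring_nf
    _ = (α + 1) / (2 * π * y1) * (π * (1 - √(xl * xr) - √((1 - xl) * (1 - xr)))) := by
        rw [integral_sqrt_chord_div_mul_one_sub hxl hxlr hxr]
    _ = 1 := by
        rw [hprod, hprod', show α = y1 / y2 from rfl]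
        field_simp [hy1.1.ne', hy2.1.ne']
        ring
end

section
/- Let $y_1 \in (0,1)$, $y_2 > 0$, $h = \sqrt{y_1+y_2-y_1y_2}$, $x_l, x_r = \frac{y_2(h\mp y_1)^2}{(y_1+y_2)^2}$, $\alpha = y_1/y_2$. Then $\int_{x_l}^{x_r} (1-x)\frac{(\alpha+1)\sqrt{(x_r-x)(x-x_l)}}{2\pi y_1 x(1-x)}\,dx = \frac{y_1}{y_1+y_2}$. -/
/-!
The factor `1 - x` cancels off a null set, leaving a constant multiple of
`∫ x in a..b, √((b - x) * (x - a)) / x`, which an explicit primitive evaluates to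
`π * ((a + b) / 2 - √(a * b))`. At the edges `a = xl`, `b = xr` this gap between the arithmetic
and geometric means is `2 * y₁ ^ 2 * y₂ / (y₁ + y₂) ^ 2`, because `√(xl * xr)` only involves
`(h - y₁) * (h + y₁)`.
-/

open Real Set MeasureTheory intervalIntegral

theorem HasDerivAt.arcsin_of_one_sub_sq_eq_s5 {u : ℝ → ℝ} {u' k x : ℝ} (hu : HasDerivAt u u' x)
    (hk : 0 < k) (hsq : 1 - u x ^ 2 = k ^ 2) :
    HasDerivAt (fun y => arcsin (u y)) (u' / k) x := by
  have hlt : |u x| < 1 := (sq_lt_one_iff_abs_lt_one _).mp (by nlinarith)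
  have hderiv := (hasDerivAt_arcsin (abs_lt.mp hlt).1.ne' (abs_lt.mp hlt).2.ne).comp x hu
  rwa [hsq, sqrt_sq hk.le, one_div_mul_eq_div] at hderiv

section SqrtQuadDivSelf

variable {a b x : ℝ}

theorem hasDerivAt_sqrt_sub_mul_sub (hx : x ∈ Ioo a b) :
    HasDerivAt (fun x => √((b - x) * (x - a))) ((a + b - 2 * x) / (2 * √((b - x) * (x - a)))) x := by
  have hq : HasDerivAt (fun x : ℝ => (b - x) * (x - a)) (a + b - 2 * x) x :=
    (((hasDerivAt_id' x).const_sub b).mul ((hasDerivAt_id' x).sub_const a)).congr_deriv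
      (by ring)
  exact hq.sqrt (by nlinarith [hx.1, hx.2])

theorem hasDerivAt_arcsin_affine (hx : x ∈ Ioo a b) :
    HasDerivAt (fun x => arcsin ((2 * x - a - b) / (b - a))) (1 / √((b - x) * (x - a))) x := by
  obtain ⟨hax, hxb⟩ := hx
  have hba : 0 < b - a := by linarith
  have hq : 0 < (b - x) * (x - a) := by nlinarith
  have hu : HasDerivAt (fun x => (2 * x - a - b) / (b - a)) (2 / (b - a)) x :=
    ((((hasDerivAt_id' x).const_mul 2).sub_const a).sub_const b).div_const (b - a)
      |>.congr_deriv (by ring)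
  have hS := sqrt_pos.2 hq
  convert hu.arcsin_of_one_sub_sq_eq_s5 (k := 2 * √((b - x) * (x - a)) / (b - a)) (by positivity)
    (by simp only [div_pow, mul_pow, sq_sqrt hq.le]; field_simp; ring) using 1
  field_simp

theorem hasDerivAt_arcsin_moebius (ha : 0 < a) (hx : x ∈ Ioo a b) :
    HasDerivAt (fun x => arcsin (((a + b) * x - 2 * a * b) / ((b - a) * x)))
      (√(a * b) / (x * √((b - x) * (x - a)))) x := by
  obtain ⟨hax, hxb⟩ := hx
  have hx0 : 0 < x := by linarith
  have hba : 0 < b - a := by linarith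
  have hq : 0 < (b - x) * (x - a) := by nlinarith
  have hab : 0 < a * b := by nlinarith
  have hu : HasDerivAt (fun x => ((a + b) * x - 2 * a * b) / ((b - a) * x))
      (2 * a * b / ((b - a) * x ^ 2)) x :=
    (((hasDerivAt_id' x).const_mul (a + b)).sub_const (2 * a * b)).div
      ((hasDerivAt_id' x).const_mul (b - a)) (by positivity) |>.congr_deriv (by field_simp; ring)
  have hS := sqrt_pos.2 hq
  have hs := sqrt_pos.2 hab
  convert hu.arcsin_of_one_sub_sq_eq_s5 (k := 2 * √(a * b) * √((b - x) * (x - a)) / ((b - a) * x))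
    (by positivity)
    (by simp only [div_pow, mul_pow, sq_sqrt hq.le, sq_sqrt hab.le]; field_simp; ring) using 1
  field_simp
  rw [sq_sqrt hab.le]

/-- A primitive of `√((b - x) * (x - a)) / x` on `[a, b]`: writing the integrand as
`((a + b - x) - a * b / x) / √((b - x) * (x - a))`, each piece has an elementary primitive. -/
noncomputable def sqrtQuadDivSelfPrimitive (a b x : ℝ) : ℝ :=
  √((b - x) * (x - a)) + (a + b) / 2 * arcsin ((2 * x - a - b) / (b - a))
    - √(a * b) * arcsin (((a + b) * x - 2 * a * b) / ((b - a) * x))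

theorem hasDerivAt_sqrtQuadDivSelfPrimitive (ha : 0 < a) (hx : x ∈ Ioo a b) :
    HasDerivAt (sqrtQuadDivSelfPrimitive a b) (√((b - x) * (x - a)) / x) x := by
  have hx0 : 0 < x := ha.trans hx.1
  have hq : 0 < (b - x) * (x - a) := by nlinarith [hx.1, hx.2]
  have hS := sqrt_pos.2 hq
  refine (((hasDerivAt_sqrt_sub_mul_sub hx).add ((hasDerivAt_arcsin_affine hx).const_mul _)).sub
    ((hasDerivAt_arcsin_moebius ha hx).const_mul _)).congr_deriv ?_
  field_simp
  rw [sq_sqrt (mul_pos ha (ha.trans (hx.1.trans hx.2))).le, sq_sqrt hq.le]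
  ring

theorem continuousOn_sqrtQuadDivSelfPrimitive (ha : 0 < a) (hab : a < b) :
    ContinuousOn (sqrtQuadDivSelfPrimitive a b) (Icc a b) := by
  have hx0 : ∀ x ∈ Icc a b, (b - a) * x ≠ 0 := fun x hx =>
    mul_ne_zero (sub_ne_zero.2 hab.ne') (ha.trans_le hx.1).ne'
  unfold sqrtQuadDivSelfPrimitive
  fun_prop (disch := assumption)

theorem integral_sqrt_sub_mul_sub_div_self (ha : 0 < a) (hab : a < b) :
    ∫ x in a..b, √((b - x) * (x - a)) / x = π * ((a + b) / 2 - √(a * b)) := by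
  have hba : b - a ≠ 0 := by linarith
  have hcont : ContinuousOn (fun x => √((b - x) * (x - a)) / x) (uIcc a b) := by
    rw [uIcc_of_le hab.le]
    exact ContinuousOn.div (by fun_prop) (by fun_prop) fun x hx => (ha.trans_le hx.1).ne'
  rw [integral_eq_sub_of_hasDerivAt_of_le hab.le (continuousOn_sqrtQuadDivSelfPrimitive ha hab)
    (fun x hx => hasDerivAt_sqrtQuadDivSelfPrimitive ha hx) hcont.intervalIntegrable]
  have hb : ((a + b) * b - 2 * a * b) / ((b - a) * b) = 1 := by
    field_simp [(ha.trans hab).ne']; ring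
  have ha' : ((a + b) * a - 2 * a * b) / ((b - a) * a) = -1 := by
    field_simp [ha.ne']; ring
  simp only [sqrtQuadDivSelfPrimitive, hb, ha', sub_self, zero_mul, mul_zero, sqrt_zero,
    show (2 * b - a - b) / (b - a) = 1 by field_simp; ring,
    show (2 * a - a - b) / (b - a) = -1 by field_simp; ring, arcsin_one, arcsin_neg_one]
  ring

end SqrtQuadDivSelf

theorem integral_one_sub_mul_div_mul_one_sub (f g : ℝ → ℝ) (a b : ℝ) :
    ∫ x in a..b, (1 - x) * (f x / (g x * (1 - x))) = ∫ x in a..b, f x / g x := by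
  refine integral_congr_ae ?_
  filter_upwards [measure_singleton (μ := volume) (1 : ℝ) |> compl_mem_ae_iff.2] with x hx _
  rw [mul_comm (g x), ← div_div, ← mul_div_assoc, mul_div_cancel₀ _ (sub_ne_zero.2 (Ne.symm hx))]

theorem lt_sqrt_add_sub_mul {y₁ y₂ : ℝ} (hy₁ : y₁ ∈ Ioo 0 1) (hy₂ : 0 < y₂) :
    y₁ < √(y₁ + y₂ - y₁ * y₂) := by
  obtain ⟨h0, h1⟩ := hy₁
  rw [lt_sqrt h0.le]
  nlinarith [mul_pos h0 (sub_pos.2 h1), mul_pos hy₂ (sub_pos.2 h1)]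

section BetaEdges

variable {y₁ y₂ h : ℝ}

theorem beta_edges_pos_lt (hy₁ : 0 < y₁) (hy₁h : y₁ < h) (hy₂ : 0 < y₂) :
    0 < y₂ * (h - y₁) ^ 2 / (y₁ + y₂) ^ 2 ∧
      y₂ * (h - y₁) ^ 2 / (y₁ + y₂) ^ 2 < y₂ * (h + y₁) ^ 2 / (y₁ + y₂) ^ 2 := by
  have : 0 < h - y₁ := sub_pos.2 hy₁h
  refine ⟨by positivity, div_lt_div_of_pos_right ?_ (by positivity)⟩
  exact mul_lt_mul_of_pos_left (by nlinarith) hy₂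

theorem beta_edges_mean_sub_sqrt (hy₁ : 0 < y₁) (hy₁h : y₁ < h) (hy₂ : 0 < y₂) :
    (y₂ * (h - y₁) ^ 2 / (y₁ + y₂) ^ 2 + y₂ * (h + y₁) ^ 2 / (y₁ + y₂) ^ 2) / 2
      - √(y₂ * (h - y₁) ^ 2 / (y₁ + y₂) ^ 2 * (y₂ * (h + y₁) ^ 2 / (y₁ + y₂) ^ 2))
      = 2 * y₁ ^ 2 * y₂ / (y₁ + y₂) ^ 2 := by
  have hprod : y₂ * (h - y₁) ^ 2 / (y₁ + y₂) ^ 2 * (y₂ * (h + y₁) ^ 2 / (y₁ + y₂) ^ 2)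
      = (y₂ * (h ^ 2 - y₁ ^ 2) / (y₁ + y₂) ^ 2) ^ 2 := by
    ring
  have : 0 < h ^ 2 - y₁ ^ 2 := by nlinarith
  rw [hprod, sqrt_sq (by positivity)]
  ring

end BetaEdges

theorem stmt_5 (y1 y2 : ℝ) (hy1 : y1 ∈ Set.Ioo (0:ℝ) 1) (hy2 : 0 < y2) :
    let h := Real.sqrt (y1 + y2 - y1 * y2)
    let xl := y2 * (h - y1) ^ 2 / (y1 + y2) ^ 2
    let xr := y2 * (h + y1) ^ 2 / (y1 + y2) ^ 2
    let α := y1 / y2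
    (∫ x in xl..xr, (1 - x) * ((α + 1) * Real.sqrt ((xr - x) * (x - xl)) /
        (2 * π * y1 * x * (1 - x)))) = y1 / (y1 + y2) := by
  intro h xl xr α
  have hy1h : y1 < h := lt_sqrt_add_sub_mul hy1 hy2
  obtain ⟨hxl, hlr⟩ := beta_edges_pos_lt hy1.1 hy1h hy2
  rw [integral_one_sub_mul_div_mul_one_sub]
  simp_rw [mul_div_mul_comm]
  rw [intervalIntegral.integral_const_mul, integral_sqrt_sub_mul_sub_div_self hxl hlr,
    beta_edges_mean_sub_sqrt hy1.1 hy1h hy2]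
  simp only [α]
  field_simp
end

section
/- Let $y_1, y_2 > 0$, $y_1, y_2 \neq 1$, $h = \sqrt{y_1+y_2-y_1y_2} > 0$, $x_l, x_r = \frac{y_2(h\mp y_1)^2}{(y_1+y_2)^2}$, $\alpha = y_1/y_2$, and let $\ell_1$ denote $\int_{x_l}^{x_r} x\, f(x)\,dx$ and $\ell_2$ denote $\int_{x_l}^{x_r}(1-x) f(x)\,dx$ where $f(x) = \frac{(\alpha+1)\sqrt{(x_r-x)(x-x_l)}}{2\pi y_1 x(1-x)}$. Then $\ell_1 = \frac{h^2 \mathbf{1}\{y_2>1\} + y_2^2 \mathbf{1}\{y_2<1\}}{y_2(y_1+y_2)}$ and $\ell_2 = \frac{h^2 \mathbf{1}\{y_1>1\} + y_1^2 \mathbf{1}\{y_1<1\}}{y_1(y_1+y_2)}$. -/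
/-!
The density is `C √((x_r - x)(x - x_l)) / (x (1 - x))`, so `x f(x)` and `(1 - x) f(x)` are
semicircle integrands with one pole outside `[x_l, x_r]`, at `1` and at `0` respectively.
After centring, both reduce to `∫_{-r}^{r} √(r² - u²) / (k - u) du = π (k - √(k² - r²))` for
`0 < r < k`, and the square roots become `√((1 - x_l)(1 - x_r)) = y₁ |h² - y₂²| / (y₁ + y₂)²` and
`√(x_l x_r) = y₂ |h² - y₁²| / (y₁ + y₂)²`. Since `h² - y² = (y₁ + y₂)(1 - y)`, the combination
`(a + b - |a - b|) / 2 = min a b` that appears is `min (h², y²)`, which is the indicator expression.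
-/

open Real Set MeasureTheory

section SemicircleCauchy

variable {r k u : ℝ}

lemma hasDerivAt_arcsin_div (hr : 0 < r) (hu : u ∈ Ioo (-r) r) :
    HasDerivAt (fun u => arcsin (u / r)) (1 / √(r ^ 2 - u ^ 2)) u := by
  obtain ⟨hu₁, hu₂⟩ := hu
  have h := (hasDerivAt_arcsin (x := u / r) (by rw [Ne, div_eq_iff hr.ne']; linarith)
    (by rw [Ne, div_eq_iff hr.ne']; linarith)).comp u ((hasDerivAt_id u).div_const r)
  refine h.congr_deriv ?_
  rw [show 1 - (u / r) ^ 2 = (r ^ 2 - u ^ 2) / r ^ 2 by field_simp, sqrt_div' _ (sq_nonneg r),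
    sqrt_sq hr.le]
  field_simp

lemma hasDerivAt_arcsin_moebius_s17 (hr : 0 < r) (hk : r < k) (hu : u ∈ Ioo (-r) r) :
    HasDerivAt (fun u => arcsin ((r ^ 2 - k * u) / (r * (k - u))))
      (-√(k ^ 2 - r ^ 2) / ((k - u) * √(r ^ 2 - u ^ 2))) u := by
  obtain ⟨hu₁, hu₂⟩ := hu
  have hku : 0 < k - u := by linarith
  have hA : 0 < r ^ 2 - u ^ 2 := by nlinarith
  have hB : 0 < k ^ 2 - r ^ 2 := by nlinarith
  set w := (r ^ 2 - k * u) / (r * (k - u))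
  have hw : 1 - w ^ 2 = (√(k ^ 2 - r ^ 2) * √(r ^ 2 - u ^ 2) / (r * (k - u))) ^ 2 := by
    rw [div_pow (√(k ^ 2 - r ^ 2) * _), mul_pow, sq_sqrt hA.le, sq_sqrt hB.le]
    simp only [w]
    field_simp
    ring
  have hw1 : 0 < 1 - w ^ 2 := by rw [hw]; positivity
  have hdw : HasDerivAt (fun u => (r ^ 2 - k * u) / (r * (k - u)))
      ((-k * (r * (k - u)) - (r ^ 2 - k * u) * (-r)) / (r * (k - u)) ^ 2) u := by
    refine HasDerivAt.div ?_ ?_ (by positivity)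
    · simpa using ((hasDerivAt_id u).const_mul k).const_sub (r ^ 2)
    · simpa using ((hasDerivAt_id u).const_sub k).const_mul r
  refine ((hasDerivAt_arcsin (by nlinarith) (by nlinarith)).comp u hdw).congr_deriv ?_
  rw [hw, sqrt_sq (by positivity)]
  have := sqrt_pos.2 hA
  have := sqrt_pos.2 hB
  field_simp
  rw [sq_sqrt hB.le]
  ring

theorem integral_sqrt_sq_sub_sq_div_sub (hr : 0 < r) (hk : r < k) :
    ∫ u in (-r)..r, √(r ^ 2 - u ^ 2) / (k - u) = π * (k - √(k ^ 2 - r ^ 2)) := by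
  have hden : ∀ u ∈ Icc (-r) r, k - u ≠ 0 := fun u hu => by linarith [hu.2]
  -- `√(r² - u²) / (k - u) = (k + u) / √(r² - u²) - (k² - r²) / ((k - u) √(r² - u²))`
  let F u := k * arcsin (u / r) - √(r ^ 2 - u ^ 2) +
    √(k ^ 2 - r ^ 2) * arcsin ((r ^ 2 - k * u) / (r * (k - u)))
  have hderiv : ∀ u ∈ Ioo (-r) r, HasDerivAt F (√(r ^ 2 - u ^ 2) / (k - u)) u := by
    intro u hu
    have hA : 0 < r ^ 2 - u ^ 2 := by nlinarith [hu.1, hu.2]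
    have hsqrt : HasDerivAt (fun u => √(r ^ 2 - u ^ 2)) (-(2 * u) / (2 * √(r ^ 2 - u ^ 2))) u :=
      (by simpa using (hasDerivAt_pow 2 u).const_sub (r ^ 2) : HasDerivAt _ (-(2 * u)) u).sqrt
        hA.ne'
    refine ((((hasDerivAt_arcsin_div hr hu).const_mul k).sub hsqrt).add
      ((hasDerivAt_arcsin_moebius_s17 hr hk hu).const_mul _)).congr_deriv ?_
    have := sqrt_pos.2 hA
    have := hden u (Ioo_subset_Icc_self hu)
    field_simp
    rw [sq_sqrt (by nlinarith), sq_sqrt hA.le]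
    ring
  have hcont : ContinuousOn F (Icc (-r) r) := by
    have : ∀ u ∈ Icc (-r) r, r * (k - u) ≠ 0 := fun u hu => mul_ne_zero hr.ne' (hden u hu)
    fun_prop (disch := assumption)
  have hint : IntervalIntegrable (fun u => √(r ^ 2 - u ^ 2) / (k - u)) volume (-r) r :=
    (ContinuousOn.div (by fun_prop) (by fun_prop) hden).intervalIntegrable_of_Icc (by linarith)
  rw [intervalIntegral.integral_eq_sub_of_hasDerivAt_of_le (by linarith) hcont hderiv hint]
  have hright : (r ^ 2 - k * r) / (r * (k - r)) = -1 := by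
    rw [div_eq_iff (mul_ne_zero hr.ne' (by linarith))]; ring
  have hleft : (r ^ 2 - k * -r) / (r * (k - -r)) = 1 := by
    rw [div_eq_iff (mul_ne_zero hr.ne' (by linarith))]; ring
  simp only [F, hright, hleft, neg_div, div_self hr.ne', arcsin_neg, arcsin_one, sub_self,
    neg_sq, sqrt_zero]
  ring

end SemicircleCauchy

section ArcIntegrals

variable {a b c : ℝ}

theorem integral_sqrt_mul_div_const_sub (hab : a < b) (hbc : b < c) :
    ∫ x in a..b, √((b - x) * (x - a)) / (c - x) =
      π * (c - (a + b) / 2 - √((c - a) * (c - b))) := by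
  set m := (a + b) / 2 with hm
  set r := (b - a) / 2 with hr
  have hshift : ∀ x, √((b - x) * (x - a)) / (c - x) =
      (fun u => √(r ^ 2 - u ^ 2) / (c - m - u)) (x - m) := fun x => by
    simp only [m, r]; ring_nf
  simp_rw [hshift]
  rw [intervalIntegral.integral_comp_sub_right (fun u => √(r ^ 2 - u ^ 2) / (c - m - u)),
    show a - m = -r by ring, show b - m = r by ring,
    integral_sqrt_sq_sub_sq_div_sub (by linarith) (by linarith),
    show (c - m) ^ 2 - r ^ 2 = (c - a) * (c - b) by ring]

theorem integral_sqrt_mul_div_sub_const (hca : c < a) (hab : a < b) :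
    ∫ x in a..b, √((b - x) * (x - a)) / (x - c) =
      π * ((a + b) / 2 - c - √((a - c) * (b - c))) := by
  have hreflect : ∀ x, √((b - x) * (x - a)) / (x - c) =
      (fun x => √((-a - x) * (x - -b)) / (-c - x)) (-x) := fun x => by ring_nf
  simp_rw [hreflect]
  rw [intervalIntegral.integral_comp_neg (fun x => √((-a - x) * (x - -b)) / (-c - x)),
    integral_sqrt_mul_div_const_sub (neg_lt_neg hab) (neg_lt_neg hca)]
  ring_nf

variable (K D : ℝ)

theorem integral_mul_sqrt_mul_div_mul_one_sub (ha : 0 < a) (hab : a < b) (hb : b < 1) :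
    ∫ x in a..b, x * (K * √((b - x) * (x - a)) / (D * x * (1 - x))) =
      K / D * (π * (1 - (a + b) / 2 - √((1 - a) * (1 - b)))) := by
  rw [← integral_sqrt_mul_div_const_sub hab hb, ← intervalIntegral.integral_const_mul]
  refine intervalIntegral.integral_congr fun x hx => ?_
  rw [uIcc_of_le hab.le] at hx
  have hx0 : x ≠ 0 := by linarith [hx.1]
  rw [show D * x * (1 - x) = x * (D * (1 - x)) by ring, ← mul_div_assoc, mul_div_mul_left _ _ hx0,
    div_mul_div_comm]

theorem integral_one_sub_mul_sqrt_mul_div_mul_one_sub (ha : 0 < a) (hab : a < b) (hb : b < 1) :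
    ∫ x in a..b, (1 - x) * (K * √((b - x) * (x - a)) / (D * x * (1 - x))) =
      K / D * (π * ((a + b) / 2 - √(a * b))) := by
  have h := integral_sqrt_mul_div_sub_const ha hab
  simp only [sub_zero] at h
  rw [← h, ← intervalIntegral.integral_const_mul]
  refine intervalIntegral.integral_congr fun x hx => ?_
  rw [uIcc_of_le hab.le] at hx
  have hx1 : 1 - x ≠ 0 := by linarith [hx.2]
  rw [show D * x * (1 - x) = (1 - x) * (D * x) by ring, ← mul_div_assoc, mul_div_mul_left _ _ hx1,
    div_mul_div_comm]

end ArcIntegrals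

lemma min_eq_half_add_sub_abs {α : Type*} [Field α] [LinearOrder α] [IsStrictOrderedRing α]
    (a b : α) : min a b = (a + b - |a - b|) / 2 := by
  linarith [min_add_max a b, max_sub_min_eq_abs' a b]

lemma ne_of_sq_sub_sq_eq_mul_one_sub {h y c : ℝ} (hc : c ≠ 0) (hy : y ≠ 1)
    (he : h ^ 2 - y ^ 2 = c * (1 - y)) : h ≠ y := by
  rintro rfl
  simp [hc, sub_eq_zero, Ne.symm hy] at he

lemma ite_add_ite_eq_min {a b c y : ℝ} (hc : 0 < c) (hab : a - b = c * (1 - y)) (hy : y ≠ 1) :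
    (if 1 < y then a else 0) + (if y < 1 then b else 0) = min a b := by
  rcases hy.lt_or_gt with hy | hy
  · rw [if_neg hy.not_gt, if_pos hy, zero_add, min_eq_right (by nlinarith)]
  · rw [if_pos hy, if_neg hy.not_gt, add_zero, min_eq_left (by nlinarith)]

section WachterEdges

variable {y1 y2 h : ℝ}

lemma one_sub_wachter_left_edge (hs : y1 + y2 ≠ 0) (hsq : h ^ 2 = y1 + y2 - y1 * y2) :
    1 - y2 * (h - y1) ^ 2 / (y1 + y2) ^ 2 = y1 * (h + y2) ^ 2 / (y1 + y2) ^ 2 := by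
  field_simp
  linear_combination -(y1 + y2) * hsq

lemma one_sub_wachter_right_edge (hs : y1 + y2 ≠ 0) (hsq : h ^ 2 = y1 + y2 - y1 * y2) :
    1 - y2 * (h + y1) ^ 2 / (y1 + y2) ^ 2 = y1 * (h - y2) ^ 2 / (y1 + y2) ^ 2 := by
  field_simp
  linear_combination -(y1 + y2) * hsq

lemma wachter_edges_pos_lt_lt_one (hy1 : 0 < y1) (hy2 : 0 < y2) (hh : 0 < h)
    (hhy1 : h ≠ y1) (hhy2 : h ≠ y2) (hsq : h ^ 2 = y1 + y2 - y1 * y2) :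
    0 < y2 * (h - y1) ^ 2 / (y1 + y2) ^ 2 ∧
      y2 * (h - y1) ^ 2 / (y1 + y2) ^ 2 < y2 * (h + y1) ^ 2 / (y1 + y2) ^ 2 ∧
      y2 * (h + y1) ^ 2 / (y1 + y2) ^ 2 < 1 := by
  have := sub_ne_zero.2 hhy1
  have := sub_ne_zero.2 hhy2
  have hright : 0 < 1 - y2 * (h + y1) ^ 2 / (y1 + y2) ^ 2 := by
    rw [one_sub_wachter_right_edge (by positivity) hsq]; positivity
  refine ⟨by positivity, (div_lt_div_iff_of_pos_right (by positivity)).2 ?_, by linarith⟩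
  nlinarith [mul_pos hy2 (mul_pos hh hy1)]

lemma wachter_one_sub_edges_mul (hs : y1 + y2 ≠ 0) (hsq : h ^ 2 = y1 + y2 - y1 * y2) :
    (1 - y2 * (h - y1) ^ 2 / (y1 + y2) ^ 2) * (1 - y2 * (h + y1) ^ 2 / (y1 + y2) ^ 2) =
      (y1 * (h ^ 2 - y2 ^ 2) / (y1 + y2) ^ 2) ^ 2 := by
  rw [one_sub_wachter_left_edge hs hsq, one_sub_wachter_right_edge hs hsq]
  ring

end WachterEdges

theorem stmt_17 (y1 y2 : ℝ) (hy1 : 0 < y1) (hy2 : 0 < y2)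
    (hy1' : y1 ≠ 1) (hy2' : y2 ≠ 1) (hpos : 0 < y1 + y2 - y1 * y2) :
    let h := Real.sqrt (y1 + y2 - y1 * y2)
    let xl := y2 * (h - y1) ^ 2 / (y1 + y2) ^ 2
    let xr := y2 * (h + y1) ^ 2 / (y1 + y2) ^ 2
    let α := y1 / y2
    let f := fun x : ℝ => (α + 1) * Real.sqrt ((xr - x) * (x - xl)) /
      (2 * π * y1 * x * (1 - x))
    (∫ x in xl..xr, x * f x) =
      ((if 1 < y2 then h ^ 2 else 0) + (if y2 < 1 then y2 ^ 2 else 0)) /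
        (y2 * (y1 + y2)) ∧
    (∫ x in xl..xr, (1 - x) * f x) =
      ((if 1 < y1 then h ^ 2 else 0) + (if y1 < 1 then y1 ^ 2 else 0)) /
        (y1 * (y1 + y2)) := by
  intro h xl xr α f
  have hs : 0 < y1 + y2 := by positivity
  have hsq : h ^ 2 = y1 + y2 - y1 * y2 := sq_sqrt hpos.le
  have hsq1 : h ^ 2 - y1 ^ 2 = (y1 + y2) * (1 - y1) := by linear_combination hsq
  have hsq2 : h ^ 2 - y2 ^ 2 = (y1 + y2) * (1 - y2) := by linear_combination hsq
  obtain ⟨hxl, hxlr, hxr⟩ := wachter_edges_pos_lt_lt_one hy1 hy2 (sqrt_pos.2 hpos)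
    (ne_of_sq_sub_sq_eq_mul_one_sub hs.ne' hy1' hsq1)
    (ne_of_sq_sub_sq_eq_mul_one_sub hs.ne' hy2' hsq2) hsq
  refine ⟨(integral_mul_sqrt_mul_div_mul_one_sub _ _ hxl hxlr hxr).trans ?_,
    (integral_one_sub_mul_sqrt_mul_div_mul_one_sub _ _ hxl hxlr hxr).trans ?_⟩
  · rw [ite_add_ite_eq_min hs hsq2 hy2', min_eq_half_add_sub_abs,
      wachter_one_sub_edges_mul hs.ne' hsq, sqrt_sq_eq_abs, abs_div, abs_mul, abs_of_pos hy1,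
      abs_of_pos (by positivity : (0 : ℝ) < (y1 + y2) ^ 2)]
    simp only [α]
    field_simp
    linear_combination (-2 * (y1 + y2)) * hsq
  · rw [ite_add_ite_eq_min hs hsq1 hy1', min_eq_half_add_sub_abs,
      show xl * xr = (y2 * (h ^ 2 - y1 ^ 2) / (y1 + y2) ^ 2) ^ 2 by ring, sqrt_sq_eq_abs,
      abs_div, abs_mul, abs_of_pos hy2, abs_of_pos (by positivity : (0 : ℝ) < (y1 + y2) ^ 2)]
    simp only [α]
    field_simp
    ring
end
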